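/- For every positive integer n, C_0(n) := Σ_{k=1}^{n} (−1)^(k−1) · [2n, n−k] equals (1/2) · [2n, n] + (−1)^n / (4n − 2). -/

import Mathlib

open Finset

/-- Rising factorial `(x)_n = x(x+1)⋯(x+n-1)`. -/
noncomputable def rfact (x : ℝ) : ℕ → ℝ
  | 0 => 1
  | n + 1 => rfact x n * (x + n)

/-- The bracket coefficient `[n, k] = (1/2)_n / ((1/2)_k (1/2)_{n-k})`. -/
noncomputable def brkt (n k : ℕ) : ℝ :=
  rfact (1 / 2) n / (rfact (1 / 2) k * rfact (1 / 2) (n - k))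

/-!
The recurrence `(2j+1)[m, j+1] = (2m-2j-1)[m, j]` makes the alternating partial sums telescope:
`(4n-2) ∑_{j=1}^{k} (-1)^(j-1) [2n, n-j] = (2n-1)[2n, n] + (-1)^k (2k+1-2n)[2n, n-k]`,
by induction on `k`. At `k = n` the last term is `(-1)^n [2n, 0] = (-1)^n`.
-/

lemma rfact_half_pos (m : ℕ) : 0 < rfact (1 / 2) m := by
  induction m with
  | zero => simp [rfact]
  | succ m ih => exact mul_pos ih (by positivity)

lemma brkt_zero_right (m : ℕ) : brkt m 0 = 1 := by
  rw [brkt, Nat.sub_zero, rfact, one_mul, div_self (rfact_half_pos m).ne']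

lemma brkt_succ_right {m j : ℕ} (hj : j < m) :
    (2 * j + 1) * brkt m (j + 1) = (2 * m - 2 * j - 1) * brkt m j := by
  obtain ⟨r, rfl⟩ : ∃ r, m = j + 1 + r := ⟨m - (j + 1), by omega⟩
  have hr : j + 1 + r - j = r + 1 := by omega
  have hj0 := (rfact_half_pos j).ne'
  have hr0 := (rfact_half_pos r).ne'
  simp only [brkt, hr, Nat.add_sub_cancel_left, rfact]
  field_simp
  push_cast
  ring

lemma mul_sum_Icc_alternating_brkt {n k : ℕ} (hk : k ≤ n) :
    (4 * (n : ℝ) - 2) * ∑ j ∈ Icc 1 k, (-1 : ℝ) ^ (j - 1) * brkt (2 * n) (n - j) =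
      (2 * n - 1) * brkt (2 * n) n + (-1) ^ k * (2 * k + 1 - 2 * n) * brkt (2 * n) (n - k) := by
  induction k with
  | zero => rw [Icc_eq_empty_of_lt zero_lt_one, sum_empty, Nat.sub_zero]; push_cast; ring
  | succ k ih =>
    set j := n - (k + 1) with hj
    have hsucc : n - k = j + 1 := by omega
    have hj_cast : (j : ℝ) = n - k - 1 := by
      rw [hj, Nat.cast_sub hk]; push_cast; ring
    have hrec := brkt_succ_right (m := 2 * n) (j := j) (by omega)
    rw [sum_Icc_succ_top (by omega), mul_add, ih (by omega), hsucc, Nat.add_sub_cancel]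
    rw [hj_cast] at hrec
    push_cast at hrec ⊢
    linear_combination -(-1 : ℝ) ^ k * hrec

theorem C_zero_eval_general (n : ℕ) :
    ∑ k ∈ Finset.Icc 1 n, (-1 : ℝ) ^ (k - 1) * brkt (2 * n) (n - k) =
      (1 / 2) * brkt (2 * n) n + (-1 : ℝ) ^ n / (4 * (n : ℝ) - 2) := by
  have hden : (4 * (n : ℝ) - 2) ≠ 0 := by
    have : (4 * n - 2 : ℤ) ≠ 0 := by omega
    exact_mod_cast this
  have hsum := mul_sum_Icc_alternating_brkt (le_refl n)
  rw [Nat.sub_self, brkt_zero_right] at hsum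
  apply mul_left_cancel₀ hden
  rw [hsum, mul_add, mul_div_cancel₀ _ hden]
  ring

theorem C_zero_eval (n : ℕ) (hn : 0 < n) :
    ∑ k ∈ Finset.Icc 1 n, (-1 : ℝ) ^ (k - 1) * brkt (2 * n) (n - k) =
      (1 / 2) * brkt (2 * n) n + (-1 : ℝ) ^ n / (4 * (n : ℝ) - 2) :=
  C_zero_eval_general n
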